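/- Let D be an m×n matrix over 𝔽₂, let V be an invertible n×n matrix over 𝔽₂, and suppose R = D·V is reduced. Then the rank of D equals the number of nonzero columns of R. -/

import Mathlib

/-!
Right multiplication by an invertible `V` preserves rank, so it suffices that the nonzero
columns of the reduced matrix `R = D * V` are linearly independent. In a vanishing combination
of them, take the column `j₀` of largest low among those with nonzero coefficient and read off
the entry at row `low R j₀`: every other column with nonzero coefficient has a strictly smaller
low, hence vanishes there, which forces the coefficient of `j₀` to be zero.
-/

open Matrix

/-- The `low` of column `j` of `R`: the largest row index `i` with `R i j ≠ 0`,
or `⊥` if the column is zero. -/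
def low {m n : ℕ} (R : Matrix (Fin m) (Fin n) (ZMod 2)) (j : Fin n) : WithBot (Fin m) :=
  (Finset.univ.filter fun i => R i j ≠ 0).max

/-- `R` is reduced if no two distinct nonzero columns have equal lows. -/
def Reduced {m n : ℕ} (R : Matrix (Fin m) (Fin n) (ZMod 2)) : Prop :=
  ∀ j₁ j₂ : Fin n, low R j₁ ≠ ⊥ → low R j₁ = low R j₂ → j₁ = j₂

/-- A square matrix is upper triangular if `V i j = 0` whenever `i > j`. -/
def UpperTri {k : ℕ} (V : Matrix (Fin k) (Fin k) (ZMod 2)) : Prop :=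
  ∀ i j : Fin k, j < i → V i j = 0

theorem Matrix.rank_eq_card_of_linearIndependent_nonzero_cols {K m n : Type*} [Field K]
    [DecidableEq K] [Fintype m] [DecidableEq m] [Fintype n] (A : Matrix m n K)
    (hA : LinearIndependent K fun j : {j // A.col j ≠ 0} => A.col j) :
    A.rank = Fintype.card {j // A.col j ≠ 0} := by
  have hrange : Set.range (fun j : {j // A.col j ≠ 0} => A.col j) = Set.range A.col \ {0} := by
    ext v
    simp only [Set.mem_range, Set.mem_sdiff, Set.mem_singleton_iff, Subtype.exists]
    constructor
    · rintro ⟨j, hj, rfl⟩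
      exact ⟨⟨j, rfl⟩, hj⟩
    · rintro ⟨⟨j, rfl⟩, hj⟩
      exact ⟨j, hj, rfl⟩
  rw [rank_eq_finrank_span_cols, ← Submodule.span_sdiff_singleton_zero, ← hrange,
    finrank_span_eq_card hA]

section Low

variable {m n : ℕ} (R : Matrix (Fin m) (Fin n) (ZMod 2))

theorem low_eq_bot_iff (j : Fin n) : low R j = ⊥ ↔ R.col j = 0 := by
  simp [low, Finset.max_eq_bot, Finset.filter_eq_empty_iff, funext_iff]

theorem le_low_of_ne_zero {i : Fin m} {j : Fin n} (h : R i j ≠ 0) :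
    (i : WithBot (Fin m)) ≤ low R j :=
  Finset.le_max (by simp [h])

theorem apply_ne_zero_of_low_eq {i : Fin m} {j : Fin n} (h : low R j = i) : R i j ≠ 0 := by
  simpa using Finset.mem_of_max h

variable {R}

theorem Reduced.apply_eq_zero_of_low_le (hR : Reduced R) {i : Fin m} {j j₀ : Fin n}
    (hj₀ : low R j₀ = i) (hle : low R j ≤ low R j₀) (hne : j ≠ j₀) : R i j = 0 := by
  by_contra hij
  have heq : low R j₀ = low R j := le_antisymm (hj₀ ▸ le_low_of_ne_zero R hij) hle
  exact hne (hR j₀ j (by simp [hj₀]) heq).symm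

theorem Reduced.linearIndependent_nonzero_cols (hR : Reduced R) :
    LinearIndependent (ZMod 2) fun j : {j // R.col j ≠ 0} => R.col j := by
  rw [Fintype.linearIndependent_iff]
  intro g hg
  by_contra! hsupp
  set T := Finset.univ.filter fun j : {j // R.col j ≠ 0} => g j ≠ 0
  have hT : T.Nonempty := by
    obtain ⟨j, hj⟩ := hsupp
    exact ⟨j, by simp [T, hj]⟩
  obtain ⟨j₀, hj₀T, hj₀max⟩ := T.exists_max_image (fun j => low R j.1) hT
  obtain ⟨i₀, hi₀⟩ := WithBot.ne_bot_iff_exists.mp ((low_eq_bot_iff R j₀.1).not.mpr j₀.2)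
  have hsingle : ∑ j, g j • R.col j.1 i₀ = g j₀ * R i₀ j₀.1 := by
    rw [Finset.sum_eq_single j₀ _ (by simp)]
    · rfl
    intro j _ hne
    by_cases hgj : g j = 0
    · simp [hgj]
    · have hle := hj₀max j (by simp [T, hgj])
      simp [hR.apply_eq_zero_of_low_le hi₀.symm hle (Subtype.coe_ne_coe.mpr hne)]
  have hzero : g j₀ * R i₀ j₀.1 = 0 := by
    rw [← hsingle]
    simpa using congrFun hg i₀
  exact mul_ne_zero (by simpa [T] using hj₀T) (apply_ne_zero_of_low_eq R hi₀.symm) hzero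

end Low

/-- the rank of `D` equals the number of nonzero columns of a reduced
form of `D`. -/
theorem stmt_10 {m n : ℕ} (D : Matrix (Fin m) (Fin n) (ZMod 2))
    (V : Matrix (Fin n) (Fin n) (ZMod 2)) (hV : IsUnit V)
    (hR : Reduced (D * V)) :
    D.rank = (Finset.univ.filter fun j : Fin n => low (D * V) j ≠ ⊥).card := by
  have hdet : IsUnit V.det := (Matrix.isUnit_iff_isUnit_det V).mp hV
  rw [← rank_mul_eq_left_of_isUnit_det V D hdet,
    rank_eq_card_of_linearIndependent_nonzero_cols _ hR.linearIndependent_nonzero_cols,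
    Fintype.card_subtype]
  simp only [ne_eq, low_eq_bot_iff]
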